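/- arXiv:2211.00949 — 6 statements merged into one kernel-verified Lean document; each statement's English description precedes it below -/
import Mathlib

section
/- Let f : ℕ → ℕ be non-decreasing with f(2^{n+1}) ≤ f(2^n)² for all n ≥ 0 and f(1) ≥ 1. Define c₁ = ⌈f(2)/f(1)⌉ and recursively for n ≥ 1: c_{2^n} = ⌈f(2^{n+1})/f(2^n)⌉ if f(1)·c₁·c₂⋯c_{2^{n-1}} < 2·f(2^n), and c_{2^n} = ⌊f(2^{n+1})/f(2^n)⌋ otherwise (where the product is over indices 1, 2, 4, ..., 2^{n-1}). Then for all n ≥ 0: f(2^{n+1}) ≤ f(1)·c₁·c₂·c₄⋯c_{2^n} ≤ 4·f(2^{n+1}). -/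
/-- Smoktunowicz–Bartholdi-type coefficient construction: with `c j = c_{2^j}`
defined by ceilings/floors of ratios `f(2^{n+1})/f(2^n)` according to whether
the partial product is below `2 f(2^n)`, the partial products approximate `f`:
`f(2^{n+1}) ≤ f(1) c₁ c₂ ⋯ c_{2^n} ≤ 4 f(2^{n+1})`. -/
theorem stmt_2 (f : ℕ → ℕ) (hmono : Monotone f) (h1 : 1 ≤ f 1)
    (hsub : ∀ n : ℕ, f (2 ^ (n + 1)) ≤ f (2 ^ n) ^ 2)
    (c : ℕ → ℕ)
    (hc0 : c 0 = ⌈(f 2 : ℚ) / (f 1 : ℚ)⌉₊)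
    (hc : ∀ n, 1 ≤ n → c n =
      if f 1 * ∏ j ∈ Finset.range n, c j < 2 * f (2 ^ n)
      then ⌈(f (2 ^ (n + 1)) : ℚ) / (f (2 ^ n) : ℚ)⌉₊
      else ⌊(f (2 ^ (n + 1)) : ℚ) / (f (2 ^ n) : ℚ)⌋₊) :
    ∀ n : ℕ, f (2 ^ (n + 1)) ≤ f 1 * ∏ j ∈ Finset.range (n + 1), c j ∧
      f 1 * ∏ j ∈ Finset.range (n + 1), c j ≤ 4 * f (2 ^ (n + 1)) := by
  have hpos : ∀ n : ℕ, 1 ≤ f (2 ^ n) := fun n =>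
    h1.trans (hmono Nat.one_le_two_pow)
  intro n
  induction n with
  | zero =>
    have h1' : (0:ℚ) < f 1 := by exact_mod_cast h1
    have h2 : (f 1 : ℚ) ≤ f 2 := by exact_mod_cast hmono (by norm_num)
    have hprod : ∏ j ∈ Finset.range (0 + 1), c j = ⌈(f 2 : ℚ) / (f 1 : ℚ)⌉₊ := by
      rw [Finset.prod_range_one, hc0]
    rw [hprod]
    have hre : (f 1 : ℚ) * ((f 2 : ℚ) / (f 1 : ℚ)) = f 2 := by field_simp
    have hceil : (f 2 : ℚ) / f 1 ≤ ⌈(f 2 : ℚ) / (f 1 : ℚ)⌉₊ := Nat.le_ceil _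
    have hceil2 : (⌈(f 2 : ℚ) / (f 1 : ℚ)⌉₊ : ℚ) < (f 2 : ℚ) / f 1 + 1 :=
      Nat.ceil_lt_add_one (by positivity)
    constructor
    · rw [← Nat.cast_le (α := ℚ)]
      push_cast
      norm_num
      nlinarith [mul_le_mul_of_nonneg_left hceil h1'.le]
    · rw [← Nat.cast_le (α := ℚ)]
      push_cast
      norm_num
      nlinarith [mul_le_mul_of_nonneg_left hceil2.le h1'.le]
  | succ n ih =>
    obtain ⟨ih1, ih2⟩ := ih
    have hcn := hc (n+1) (by omega)
    set P : ℕ := f 1 * ∏ j ∈ Finset.range (n + 1), c j with hPdef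
    have hrw : f 1 * ∏ j ∈ Finset.range (n + 1 + 1), c j = P * c (n+1) := by
      rw [hPdef, Finset.prod_range_succ]; ring
    rw [hrw]
    have hfA : (0:ℚ) < f (2 ^ (n+1)) := by exact_mod_cast hpos (n+1)
    have hfB : (0:ℚ) < f (2 ^ (n+1+1)) := by exact_mod_cast hpos (n+2)
    have hAB : (f (2^(n+1)) : ℚ) ≤ f (2^(n+1+1)) := by
      exact_mod_cast hmono (Nat.pow_le_pow_right (by norm_num) (by omega))
    set r : ℚ := (f (2 ^ (n+1+1)) : ℚ) / (f (2 ^ (n+1)) : ℚ) with hr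
    have hr0 : (0:ℚ) ≤ r := by positivity
    have hr1 : (1:ℚ) ≤ r := (one_le_div hfA).2 hAB
    have hAr : (f (2^(n+1)) : ℚ) * r = f (2^(n+1+1)) := by
      rw [hr]; field_simp
    have hP1 : (f (2^(n+1)) : ℚ) ≤ (P : ℚ) := by exact_mod_cast ih1
    have hP4 : (P : ℚ) ≤ 4 * f (2^(n+1)) := by exact_mod_cast ih2
    have hP0 : (0:ℚ) ≤ (P : ℚ) := by positivity
    by_cases hcase : P < 2 * f (2 ^ (n+1))
    · rw [if_pos hcase] at hcn
      have hcaseQ : (P : ℚ) < 2 * f (2^(n+1)) := by exact_mod_cast hcase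
      rw [hcn]
      have hceil : r ≤ (⌈r⌉₊ : ℚ) := Nat.le_ceil r
      have hceil2 : (⌈r⌉₊ : ℚ) < r + 1 := Nat.ceil_lt_add_one hr0
      have hceil0 : (0:ℚ) ≤ (⌈r⌉₊ : ℚ) := by positivity
      constructor
      · rw [← Nat.cast_le (α := ℚ)]
        push_cast
        have key : (f (2^(n+1)) : ℚ) * r ≤ (P:ℚ) * ⌈r⌉₊ := mul_le_mul hP1 hceil hr0 hP0
        linarith
      · rw [← Nat.cast_le (α := ℚ)]
        push_cast
        have key : (P:ℚ) * ⌈r⌉₊ ≤ 2 * (f (2^(n+1)) : ℚ) * (r + 1) :=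
          mul_le_mul hcaseQ.le hceil2.le hceil0 (by positivity)
        nlinarith
    · rw [if_neg hcase] at hcn
      push_neg at hcase
      have hcaseQ : (2 * f (2^(n+1)) : ℚ) ≤ (P : ℚ) := by exact_mod_cast hcase
      rw [hcn]
      have hfl : (⌊r⌋₊ : ℚ) ≤ r := Nat.floor_le hr0
      have hfl2 : r - 1 < (⌊r⌋₊ : ℚ) := by
        have := Nat.lt_floor_add_one r
        linarith
      have hfl1 : (1:ℚ) ≤ (⌊r⌋₊ : ℚ) := by
        exact_mod_cast Nat.le_floor (by exact_mod_cast hr1)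
      have hfl0 : (0:ℚ) ≤ (⌊r⌋₊ : ℚ) := by positivity
      constructor
      · rw [← Nat.cast_le (α := ℚ)]
        push_cast
        by_cases h2B : (f (2^(n+1+1)) : ℚ) ≤ 2 * f (2^(n+1))
        · have key : (P:ℚ) * 1 ≤ (P:ℚ) * ⌊r⌋₊ := mul_le_mul_of_nonneg_left hfl1 hP0
          linarith
        · push_neg at h2B
          have key : 2 * (f (2^(n+1)) : ℚ) * (r - 1) ≤ (P:ℚ) * ⌊r⌋₊ :=
            mul_le_mul hcaseQ hfl2.le (by linarith) hP0
          nlinarith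
      · rw [← Nat.cast_le (α := ℚ)]
        push_cast
        have key : (P:ℚ) * ⌊r⌋₊ ≤ 4 * (f (2^(n+1)) : ℚ) * r :=
          mul_le_mul hP4 hfl hfl0 (by positivity)
        nlinarith
end

section
/- Let γ : ℕ → ℕ be a function satisfying: γ is increasing, and γ'(m) ≤ γ'(n)^d for every d ≥ 1 and every m ∈ {n, ..., dn}, where γ'(n) = γ(n) - γ(n-1). Suppose f : ℕ → ℕ is equivalent to γ, witnessed by C ∈ ℕ with f(n) ≤ γ(Cn) and γ(n) ≤ f(Cn) for all n. Then for all D ≥ C² and all n ≥ 1: f(2CDn) - f(2CDn - C) ≤ 2D²n · (f(CDn) - f(Cn - C))^{2D}. -/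
lemma tele_aux (γ : ℕ → ℕ) (K a : ℕ) : ∀ b, a ≤ b →
    (∀ k, a < k → k ≤ b → γ k - γ (k-1) ≤ K) → γ b - γ a ≤ (b - a) * K := by
  intro b
  induction b with
  | zero => intro h _; interval_cases a; simp
  | succ b ih =>
    intro hab hk
    rcases Nat.eq_or_lt_of_le hab with h | h
    · subst h; simp
    · have hab' : a ≤ b := Nat.lt_succ_iff.mp h
      calc γ (b+1) - γ a ≤ (γ (b+1) - γ b) + (γ b - γ a) :=
            tsub_le_tsub_add_tsub
        _ ≤ K + (b - a) * K := by
            refine Nat.add_le_add ?_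
              (ih hab' fun k hk1 hk2 => hk k hk1 (le_trans hk2 (Nat.le_succ b)))
            have := hk (b+1) (Nat.lt_succ_of_le hab') le_rfl
            simpa using this
        _ ≤ (b + 1 - a) * K := by
            have h3 : b + 1 - a = (b - a) + 1 := by omega
            rw [h3, Nat.add_mul, one_mul, Nat.add_comm]

/-- If `γ` is increasing with `γ' m ≤ (γ' n)^d` for `n ≤ m ≤ d n`
(as for growth functions of algebras), and `f` is equivalent to `γ`
witnessed by `C` (`f n ≤ γ (C n)` and `γ n ≤ f (C n)`), then for all
`D ≥ C²` and `n ≥ 1`: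
`f(2CDn) - f(2CDn - C) ≤ 2 D² n (f(CDn) - f(Cn - C))^(2D)`. -/
theorem stmt_8 (γ f : ℕ → ℕ) (hγ : StrictMono γ)
    (hγd : ∀ d : ℕ, 1 ≤ d → ∀ n m : ℕ, n ≤ m → m ≤ d * n →
      γ m - γ (m - 1) ≤ (γ n - γ (n - 1)) ^ d)
    (C : ℕ) (hC : 1 ≤ C)
    (h1 : ∀ n, f n ≤ γ (C * n)) (h2 : ∀ n, γ n ≤ f (C * n)) :
    ∀ D : ℕ, C ^ 2 ≤ D → ∀ n : ℕ, 1 ≤ n →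
      f (2 * C * D * n) - f (2 * C * D * n - C) ≤
        2 * D ^ 2 * n * (f (C * D * n) - f (C * n - C)) ^ (2 * D) := by
  intro D hD n hn
  have hC2 : 1 ≤ C ^ 2 := Nat.one_le_pow _ _ hC
  have hD1 : 1 ≤ D := le_trans hC2 hD
  have hγmono : Monotone γ := hγ.monotone
  set m : ℕ := 2 * D * n with hm
  have hm1 : 1 ≤ m := Nat.mul_pos (Nat.mul_pos Nat.zero_lt_two hD1) hn
  have e1 : 2 * C * D * n = C * m := by rw [hm]; ring
  have e2 : 2 * C * D * n - C = C * (m - 1) := by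
    rw [e1, Nat.mul_sub, Nat.mul_one]
  set B : ℕ := f (C * D * n) - f (C * n - C) with hB
  -- γ'(Dn) ≤ B
  have h5 : γ (D * n) - γ (D * n - 1) ≤ B := by
    apply tsub_le_tsub
    · have := h2 (D * n); rwa [show C * (D * n) = C * D * n by ring] at this
    · have hle : C ^ 2 * (n - 1) ≤ D * n - 1 := by
        have t1 : C ^ 2 * (n - 1) ≤ D * (n - 1) := Nat.mul_le_mul_right _ hD
        have t2 : D * (n - 1) = D * n - D := by rw [Nat.mul_sub, Nat.mul_one]
        have t3 : D ≤ D * n := Nat.le_mul_of_pos_right _ hn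
        omega
      calc f (C * n - C) = f (C * (n - 1)) := by
            rw [Nat.mul_sub, Nat.mul_one]
        _ ≤ γ (C ^ 2 * (n - 1)) := by
            have := h1 (C * (n - 1))
            rwa [show C * (C * (n - 1)) = C ^ 2 * (n - 1) by ring] at this
        _ ≤ γ (D * n - 1) := hγmono hle
  -- γ'(2Dn) ≤ γ'(Dn)^2
  have h4 : γ m - γ (m - 1) ≤ (γ (D * n) - γ (D * n - 1)) ^ 2 := by
    apply hγd 2 one_le_two (D * n) m
    · rw [hm]; nlinarith
    · exact le_of_eq (by rw [hm]; ring)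
  -- telescoping bound
  have key : f (C * m) - f (C * (m - 1)) ≤
      (C ^ 2 * m - (m - 1)) * ((γ m - γ (m - 1)) ^ (C ^ 2)) := by
    calc f (C * m) - f (C * (m - 1)) ≤ γ (C ^ 2 * m) - γ (m - 1) := by
          apply tsub_le_tsub
          · have := h1 (C * m)
            rwa [show C * (C * m) = C ^ 2 * m by ring] at this
          · exact h2 (m - 1)
      _ ≤ (C ^ 2 * m - (m - 1)) * ((γ m - γ (m - 1)) ^ (C ^ 2)) := by
          apply tele_aux
          · calc m - 1 ≤ m := Nat.sub_le _ _
              _ ≤ C ^ 2 * m := Nat.le_mul_of_pos_left _ hC2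
          · intro k hk1 hk2
            exact hγd (C ^ 2) hC2 m k (by omega) hk2
  rw [e2, e1]
  rcases Nat.eq_zero_or_pos B with hB0 | hB1
  · have hz0 : γ (D * n) - γ (D * n - 1) = 0 := by omega
    have hz : γ m - γ (m - 1) = 0 := by
      have h4' := h4; rw [hz0] at h4'; simpa using h4'
    calc f (C * m) - f (C * (m - 1)) ≤ _ := key
      _ = 0 := by rw [hz, zero_pow (by omega : C ^ 2 ≠ 0), Nat.mul_zero]
      _ ≤ _ := Nat.zero_le _
  · have hBp : (γ m - γ (m - 1)) ^ (C ^ 2) ≤ B ^ (2 * D) := by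
      calc (γ m - γ (m - 1)) ^ (C ^ 2)
          ≤ ((γ (D * n) - γ (D * n - 1)) ^ 2) ^ (C ^ 2) :=
            Nat.pow_le_pow_left h4 _
        _ = (γ (D * n) - γ (D * n - 1)) ^ (2 * C ^ 2) := by rw [← pow_mul]
        _ ≤ B ^ (2 * C ^ 2) := Nat.pow_le_pow_left h5 _
        _ ≤ B ^ (2 * D) := Nat.pow_le_pow_right hB1 (by omega)
    have hcoef : C ^ 2 * m - (m - 1) ≤ 2 * D ^ 2 * n := by
      have t1 : C ^ 2 * m ≤ D * m := Nat.mul_le_mul_right _ hD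
      have t2 : D * m = 2 * D ^ 2 * n := by rw [hm]; ring
      omega
    calc f (C * m) - f (C * (m - 1)) ≤ _ := key
      _ ≤ 2 * D ^ 2 * n * B ^ (2 * D) := Nat.mul_le_mul hcoef hBp
end

section
/- Define f : ℕ → ℕ piecewise using parameters 2 < n₁ and d₁ > 2 with n₁ sufficiently large: f(x) = 2^x for x ≤ n₁; f(x) = f(x-1) + x + 1 for n₁ < x ≤ d₁n₁. Then for all p, q ≥ 1 with p + q ≤ d₁n₁, we have f(p+q) ≤ f(p)·f(q), provided n₁ is large enough that f(d₁n₁) = 2^{n₁} + α₁ ≤ 2^{n₁ + 1/3} where α₁ = f(d₁n₁) - f(n₁) < d₁²n₁². -/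
/-- Base-interval submultiplicativity: with `f x = 2^x` for `x ≤ n₁` and
`f x = f (x-1) + x + 1` for `n₁ < x ≤ d₁ n₁`, provided
`f (d₁ n₁) ≤ 2^(n₁ + 1/3)`, one has `f (p+q) ≤ f p * f q` for all
`p, q ≥ 1` with `p + q ≤ d₁ n₁`. -/
theorem stmt_9 (n1 d1 : ℕ) (hn1 : 2 < n1) (hd1 : 2 < d1)
    (f : ℕ → ℕ)
    (hf1 : ∀ x : ℕ, x ≤ n1 → f x = 2 ^ x)
    (hf2 : ∀ x : ℕ, n1 < x → x ≤ d1 * n1 → f x = f (x - 1) + x + 1)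
    (hbound : (f (d1 * n1) : ℝ) ≤ 2 ^ ((n1 : ℝ) + 1 / 3)) :
    ∀ p q : ℕ, 1 ≤ p → 1 ≤ q → p + q ≤ d1 * n1 → f (p + q) ≤ f p * f q := by
  have hstep : ∀ x : ℕ, x + 1 ≤ d1 * n1 → f x ≤ f (x + 1) := by
    intro x hx
    rcases le_or_gt (x + 1) n1 with h | h
    · rw [hf1 x (by omega), hf1 (x + 1) h]
      exact Nat.pow_le_pow_right (by norm_num) (by omega)
    · rw [hf2 (x + 1) h hx]
      simp only [Nat.add_sub_cancel]
      omega
  have hmono : ∀ a b : ℕ, a ≤ b → b ≤ d1 * n1 → f a ≤ f b := by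
    intro a b hab hb
    induction b, hab using Nat.le_induction with
    | base => exact le_rfl
    | succ b hb' ih => exact (ih (by omega)).trans (hstep b (by omega))
  intro p q hp hq hpq
  rcases le_or_gt (p + q) n1 with h | h
  · rw [hf1 (p + q) h, hf1 p (by omega), hf1 q (by omega), pow_add]
  · have h1 : f (p + q) ≤ f (d1 * n1) := hmono _ _ hpq le_rfl
    have h2 : f (d1 * n1) ≤ 2 ^ (n1 + 1) := by
      have heq : ((2 ^ (n1 + 1) : ℕ) : ℝ) = (2 : ℝ) ^ ((n1 : ℝ) + 1) := by
        rw [show ((n1 : ℝ) + 1) = ((n1 + 1 : ℕ) : ℝ) by push_cast; ring,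
          Real.rpow_natCast]
        push_cast
        ring
      have hle : (2 : ℝ) ^ ((n1 : ℝ) + 1 / 3) ≤ (2 : ℝ) ^ ((n1 : ℝ) + 1) :=
        Real.rpow_le_rpow_of_exponent_le (by norm_num) (by norm_num)
      have := hbound.trans hle
      rw [← heq] at this
      exact_mod_cast this
    have hfp : 2 ^ (min p n1) ≤ f p := by
      rcases le_or_gt p n1 with h' | h'
      · rw [hf1 p h', min_eq_left h']
      · rw [min_eq_right h'.le, ← hf1 n1 le_rfl]
        exact hmono n1 p h'.le (by omega)
    have hfq : 2 ^ (min q n1) ≤ f q := by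
      rcases le_or_gt q n1 with h' | h'
      · rw [hf1 q h', min_eq_left h']
      · rw [min_eq_right h'.le, ← hf1 n1 le_rfl]
        exact hmono n1 q h'.le (by omega)
    have hmin : n1 + 1 ≤ min p n1 + min q n1 := by omega
    calc f (p + q) ≤ 2 ^ (n1 + 1) := h1.trans h2
      _ ≤ 2 ^ (min p n1 + min q n1) := Nat.pow_le_pow_right (by norm_num) hmin
      _ = 2 ^ (min p n1) * 2 ^ (min q n1) := pow_add 2 _ _
      _ ≤ f p * f q := Nat.mul_le_mul hfp hfq
end

section
/- Let A = ⊕_{i≥0} A_i be a finitely generated graded semiprime algebra over a field F, generated by V = F + A_1 + ⋯ + A_p, with growth function γ(n) = dim_F (⊕_{i=0}^{pn} A_i). Then for all m, t, N, s ∈ ℕ with t, s ≥ 1: γ(m+t) − γ(m) ≤ (γ(N+s) − γ(N)) · (γ(N+m+t+s) − γ(N+m)). -/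
/-!
Write `A_{(a, b]} = ⊕_{a < i ≤ b} A_i`, so that `γ v - γ u = dim A_{(pu, pv]}`. Right
multiplication gives a linear map `A_{(pm, p(m+t)]} → Hom(A_{(pN, p(N+s)]}, A_{(p(N+m), p(N+m+t+s)]})`,
and the inequality is the dimension count for it once it is injective. An element `c` of the
kernel is killed on the left by `A_{pN+1}, …, A_{pN+p}`; since `A` is generated in degrees
`1, …, p`, these generate the left ideal `A_{≥ pN+1}`, so `A_{≥ pN+1} c = 0`. As `c` has positive
degree, semiprimeness lets one lower the bound `pN + 1` one degree at a time down to `0`,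
whence `A c = 0` and `c = 0`.
-/

open Module DirectSum

section Rank

variable {F M ι : Type*} [Field F] [AddCommGroup M] [Module F M] {V : ι → Submodule F M}

theorem Submodule.finiteDimensional_biSup [∀ i, FiniteDimensional F (V i)] {s : Set ι}
    (hs : s.Finite) : FiniteDimensional F (⨆ i ∈ s, V i : Submodule F M) := by
  have := hs.to_subtype
  rw [iSup_subtype']
  infer_instance

theorem iSupIndep.finrank_biSup_union (hV : iSupIndep V) {s t : Set ι} (hst : Disjoint s t)
    [FiniteDimensional F (⨆ i ∈ s, V i : Submodule F M)]
    [FiniteDimensional F (⨆ i ∈ t, V i : Submodule F M)] :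
    finrank F (⨆ i ∈ s ∪ t, V i : Submodule F M) =
      finrank F (⨆ i ∈ s, V i : Submodule F M) + finrank F (⨆ i ∈ t, V i : Submodule F M) := by
  rw [iSup_union, ← Submodule.finrank_sup_add_finrank_inf_eq,
    (hV.disjoint_biSup_biSup hst).eq_bot, finrank_bot, add_zero]

end Rank

theorem Submodule.finrank_le_mul_of_mul_le {F A : Type*} [Field F] [Ring A] [Algebra F A]
    {V₀ V₁ V₂ : Submodule F A} [FiniteDimensional F V₁] [FiniteDimensional F V₂]
    (hmul : V₁ * V₀ ≤ V₂) (hfaithful : ∀ c ∈ V₀, (∀ u ∈ V₁, u * c = 0) → c = 0) :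
    finrank F V₀ ≤ finrank F V₁ * finrank F V₂ := by
  let T : V₀ →ₗ[F] V₁ →ₗ[F] V₂ := LinearMap.mk₂ F
    (fun c u => ⟨u * c, hmul (Submodule.mul_mem_mul u.2 c.2)⟩)
    (fun _ _ _ => by ext; simp [mul_add]) (fun _ _ _ => by ext; simp)
    (fun _ _ _ => by ext; simp [add_mul]) (fun _ _ _ => by ext; simp)
  have hT : Function.Injective T := by
    refine (injective_iff_map_eq_zero T).2 fun c hc =>
      Subtype.ext <| hfaithful c c.2 fun u hu => ?_
    simpa [T] using congrArg Subtype.val (LinearMap.congr_fun hc ⟨u, hu⟩)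
  simpa [finrank_linearMap] using LinearMap.finrank_le_finrank_of_injective hT

namespace GradedAlgebra

variable {F A : Type*} [Field F] [Ring A] [Algebra F A] (𝒜 : ℕ → Submodule F A)

def tail (n : ℕ) : Submodule F A := ⨆ i ∈ Set.Ici n, 𝒜 i

theorem le_tail {n i : ℕ} (h : n ≤ i) : 𝒜 i ≤ tail 𝒜 n :=
  le_biSup 𝒜 (Set.mem_Ici.2 h)

theorem iSup_Ioc_le_tail {n a : ℕ} (h : n ≤ a + 1) (b : ℕ) :
    ⨆ i ∈ Set.Ioc a b, 𝒜 i ≤ tail 𝒜 n :=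
  iSup₂_le fun _ hi => le_tail 𝒜 (by have := hi.1; omega)

variable [GradedAlgebra 𝒜]

theorem finrank_iSup_Iic_sub [∀ i, FiniteDimensional F (𝒜 i)] {a b : ℕ} (hab : a ≤ b) :
    finrank F (⨆ i ∈ Set.Iic b, 𝒜 i : Submodule F A) -
        finrank F (⨆ i ∈ Set.Iic a, 𝒜 i : Submodule F A) =
      finrank F (⨆ i ∈ Set.Ioc a b, 𝒜 i : Submodule F A) := by
  have := Submodule.finiteDimensional_biSup (V := 𝒜) (Set.finite_Iic a)
  have := Submodule.finiteDimensional_biSup (V := 𝒜) (Set.finite_Ioc a b)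
  rw [← Set.Iic_union_Ioc_eq_Iic hab,
    (Decomposition.isInternal 𝒜).submodule_iSupIndep.finrank_biSup_union
      (Set.Iic_disjoint_Ioc le_rfl), Nat.add_sub_cancel_left]

theorem mul_le_graded (i j : ℕ) : 𝒜 i * 𝒜 j ≤ 𝒜 (i + j) :=
  Submodule.mul_le.2 fun _ hx _ hy => SetLike.mul_mem_graded hx hy

theorem iSup_Ioc_mul_iSup_Ioc_le (a b c d : ℕ) :
    (⨆ i ∈ Set.Ioc a b, 𝒜 i) * (⨆ j ∈ Set.Ioc c d, 𝒜 j) ≤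
      ⨆ k ∈ Set.Ioc (a + c) (b + d), 𝒜 k := by
  simp_rw [Submodule.iSup_mul, Submodule.mul_iSup]
  refine iSup₂_le fun i hi => iSup₂_le fun j hj => (mul_le_graded 𝒜 i j).trans ?_
  exact le_biSup 𝒜 ⟨by have := hi.1; have := hj.1; omega, by have := hi.2; have := hj.2; omega⟩

theorem mem_tail_zero (x : A) : x ∈ tail 𝒜 0 :=
  (Decomposition.isInternal 𝒜).submodule_iSup_eq_top.ge.trans
    (iSup_le fun i => le_tail 𝒜 i.zero_le) Submodule.mem_top

theorem tail_mul_tail_le (m n : ℕ) : tail 𝒜 m * tail 𝒜 n ≤ tail 𝒜 (m + n) := by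
  simp_rw [tail, Submodule.iSup_mul, Submodule.mul_iSup]
  exact iSup₂_le fun i hi => iSup₂_le fun j hj =>
    (mul_le_graded 𝒜 i j).trans (le_tail 𝒜 (add_le_add hi hj))

theorem eq_zero_of_forall_tail_mul_eq_zero
    (hsemiprime : ∀ a : A, (∀ x : A, a * x * a = 0) → a = 0) {a : A} (ha : a ∈ tail 𝒜 1)
    (K : ℕ) (hK : ∀ y ∈ tail 𝒜 K, y * a = 0) : a = 0 := by
  induction K with
  | zero => exact hsemiprime a fun x => by rw [mul_assoc, hK x (mem_tail_zero 𝒜 x), mul_zero]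
  | succ K ih =>
    refine ih fun y hy => hsemiprime _ fun x => ?_
    -- `(y a) x (y a) = y (a x y) a`, and `a x y` lies one degree deeper than `y`
    have hdeep : a * x * y ∈ tail 𝒜 (K + 1) := by
      have := tail_mul_tail_le 𝒜 1 K <| Submodule.mul_mem_mul
        (tail_mul_tail_le 𝒜 1 0 (Submodule.mul_mem_mul ha (mem_tail_zero 𝒜 x))) hy
      rwa [add_comm] at this
    rw [show y * a * x * (y * a) = y * (a * x * y * a) by simp only [mul_assoc], hK _ hdeep,
      mul_zero]

/- The elements whose components of every degree `n > p` lie in `∑ A_k A_{n-k}` form a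
subalgebra containing the generators. -/
theorem le_iSup_mul_of_adjoin_eq_top {p : ℕ}
    (hgen : Algebra.adjoin F (⋃ i ∈ Set.Icc 1 p, (𝒜 i : Set A)) = ⊤) {j : ℕ} (hj : p < j) :
    𝒜 j ≤ ⨆ k ∈ Set.Icc 1 p, 𝒜 k * 𝒜 (j - k) := by
  set D : ℕ → Submodule F A := fun n => ⨆ k ∈ Set.Icc 1 p, 𝒜 k * 𝒜 (n - k)
  have hD : ∀ n, ∀ k ∈ Set.Icc 1 p, 𝒜 k * 𝒜 (n - k) ≤ D n := fun n k hk =>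
    le_biSup (fun k => 𝒜 k * 𝒜 (n - k)) hk
  have hzero_mul : ∀ n, 𝒜 0 * D n ≤ D n := fun n => by
    simp_rw [D, Submodule.mul_iSup, ← mul_assoc]
    exact iSup₂_mono fun k _ => mul_le_mul_left (by simpa using mul_le_graded 𝒜 0 k) _
  have hmul : ∀ i k, p ≤ i → D i * 𝒜 k ≤ D (i + k) := fun i k hi => by
    simp_rw [D, Submodule.iSup_mul, mul_assoc]
    refine iSup₂_le fun l hl => (mul_le_mul_right ?_ _).trans (hD (i + k) l hl)
    rw [show i + k - l = i - l + k by have := hl.2; omega]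
    exact mul_le_graded 𝒜 _ _
  suffices h : ∀ x : A, ∀ n, p < n → (decompose 𝒜 x n : A) ∈ D n by
    intro y hy
    exact decompose_of_mem_same 𝒜 hy ▸ h y j hj
  intro x
  induction (hgen ▸ Algebra.mem_top : x ∈ Algebra.adjoin F _) using Algebra.adjoin_induction with
  | mem x hx =>
    obtain ⟨i, hi, hxi⟩ := Set.mem_iUnion₂.1 hx
    intro n hn
    rw [decompose_of_mem_ne 𝒜 hxi (by have := hi.2; omega)]
    exact zero_mem _
  | algebraMap r =>
    intro n hn
    rw [decompose_of_mem_ne 𝒜 (SetLike.algebraMap_mem_graded 𝒜 r) (by omega)]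
    exact zero_mem _
  | add x y _ _ hx hy =>
    intro n hn
    simpa only [decompose_add, DirectSum.add_apply, Submodule.coe_add] using
      add_mem (hx n hn) (hy n hn)
  | mul x y _ _ hx hy =>
    intro n hn
    rw [decompose_mul, coe_mul_apply_eq_sum_antidiagonal]
    refine sum_mem fun ⟨i, k⟩ hik => ?_
    rw [Finset.HasAntidiagonal.mem_antidiagonal] at hik
    obtain rfl | hi := Nat.eq_zero_or_pos i
    · rw [zero_add] at hik
      subst hik
      exact hzero_mul k (Submodule.mul_mem_mul (SetLike.coe_mem _) (hy k hn))
    obtain hip | hpi := le_or_gt i p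
    · obtain rfl : k = n - i := by omega
      exact hD n i ⟨hi, hip⟩ (Submodule.mul_mem_mul (SetLike.coe_mem _) (SetLike.coe_mem _))
    · exact hik ▸ hmul i k hpi.le (Submodule.mul_mem_mul (hx i hpi) (SetLike.coe_mem _))

theorem tail_le_of_forall_Ioc_le {p : ℕ}
    (hgen : Algebra.adjoin F (⋃ i ∈ Set.Icc 1 p, (𝒜 i : Set A)) = ⊤) (I : Submodule A A) (K : ℕ)
    (h : ∀ j ∈ Set.Ioc K (K + p), 𝒜 j ≤ I.restrictScalars F) :
    tail 𝒜 (K + 1) ≤ I.restrictScalars F := by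
  refine iSup₂_le fun j hj => ?_
  induction j using Nat.strong_induction_on with
  | _ j ih =>
    obtain hjp | hjp := le_or_gt j (K + p)
    · exact h j ⟨hj, hjp⟩
    refine (le_iSup_mul_of_adjoin_eq_top 𝒜 hgen (by omega)).trans <| iSup₂_le fun k hk => ?_
    refine Submodule.mul_le.2 fun w _ z hz => I.smul_mem w ?_
    exact ih (j - k) (by have := hk.1; omega) (Set.mem_Ici.2 (by have := hk.2; omega)) hz

end GradedAlgebra

open GradedAlgebra in
theorem stmt_11_general {F A : Type*} [Field F] [Ring A] [Algebra F A]
    (𝒜 : ℕ → Submodule F A) [GradedAlgebra 𝒜]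
    (hfd : ∀ i, FiniteDimensional F (𝒜 i))
    (p : ℕ)
    (hgen : Algebra.adjoin F (⋃ i ∈ Set.Icc 1 p, (𝒜 i : Set A)) = ⊤)
    (hsemiprime : ∀ a : A, (∀ x : A, a * x * a = 0) → a = 0)
    (γ : ℕ → ℕ)
    (hγ : ∀ n : ℕ, γ n = Module.finrank F (⨆ i ∈ Set.Iic (p * n), 𝒜 i : Submodule F A)) :
    ∀ m t N s : ℕ, 1 ≤ t → 1 ≤ s →
      γ (m + t) - γ m ≤ (γ (N + s) - γ N) * (γ (N + m + t + s) - γ (N + m)) := by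
  intro m t N s _ hs
  have hγ_sub : ∀ a b, a ≤ b →
      γ b - γ a = finrank F (⨆ i ∈ Set.Ioc (p * a) (p * b), 𝒜 i : Submodule F A) :=
    fun a b hab => by rw [hγ, hγ, finrank_iSup_Iic_sub 𝒜 (Nat.mul_le_mul_left p hab)]
  rw [hγ_sub m (m + t) (by omega), hγ_sub N (N + s) (by omega), hγ_sub (N + m) _ (by omega)]
  have := Submodule.finiteDimensional_biSup (V := 𝒜) (Set.finite_Ioc (p * N) (p * (N + s)))
  have := Submodule.finiteDimensional_biSup (V := 𝒜)
    (Set.finite_Ioc (p * (N + m)) (p * (N + m + t + s)))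
  refine Submodule.finrank_le_mul_of_mul_le ?_ fun c hc hann => ?_
  · rw [show p * (N + m) = p * N + p * m by ring,
      show p * (N + m + t + s) = p * (N + s) + p * (m + t) by ring]
    exact iSup_Ioc_mul_iSup_Ioc_le 𝒜 _ _ _ _
  let I : Submodule A A := LinearMap.ker (LinearMap.toSpanSingleton A A c)
  have hwindow : ∀ j ∈ Set.Ioc (p * N) (p * N + p), 𝒜 j ≤ I.restrictScalars F :=
    fun j hj y hy => hann y <| le_biSup (s := Set.Ioc (p * N) (p * (N + s))) 𝒜
      ⟨hj.1, hj.2.trans (by rw [Nat.mul_add]; nlinarith)⟩ hy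
  refine eq_zero_of_forall_tail_mul_eq_zero 𝒜 hsemiprime ?_ (p * N + 1)
    fun y hy => tail_le_of_forall_Ioc_le 𝒜 hgen I (p * N) hwindow hy
  exact iSup_Ioc_le_tail 𝒜 (by omega) _ hc

/-- For a finitely generated graded semiprime algebra `A = ⊕ 𝒜 i` generated
over `F` by the components of degrees `1, …, p`, with growth function
`γ n = dim_F ⊕_{i ≤ p n} 𝒜 i`, for all `m, t, N, s` with `t, s ≥ 1`:
`γ(m+t) - γ m ≤ (γ(N+s) - γ N) * (γ(N+m+t+s) - γ(N+m))`. -/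
theorem stmt_11 {F A : Type*} [Field F] [Ring A] [Algebra F A]
    (𝒜 : ℕ → Submodule F A) [GradedAlgebra 𝒜]
    (hfd : ∀ i, FiniteDimensional F (𝒜 i))
    (p : ℕ) (hp : 1 ≤ p)
    (hgen : Algebra.adjoin F (⋃ i ∈ Set.Icc 1 p, (𝒜 i : Set A)) = ⊤)
    (hsemiprime : ∀ a : A, (∀ x : A, a * x * a = 0) → a = 0)
    (γ : ℕ → ℕ)
    (hγ : ∀ n : ℕ, γ n = Module.finrank F (⨆ i ∈ Set.Iic (p * n), 𝒜 i : Submodule F A)) :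
    ∀ m t N s : ℕ, 1 ≤ t → 1 ≤ s →
      γ (m + t) - γ m ≤ (γ (N + s) - γ N) * (γ (N + m + t + s) - γ (N + m)) :=
  stmt_11_general 𝒜 hfd p hgen hsemiprime γ hγ
end

section
/- Let f, g : ℕ → ℕ with g increasing, g having non-decreasing discrete derivative, and suppose there is C ∈ ℕ with f(n) ≤ g(Cn) and g(n) ≤ f(Cn) for all n. Then for all m, N ≥ 1: f((C²+1)m) − f(C²m) ≤ (f(2C²N) − f(N)) · (f(2C²N + (C⁴+C²)m) − f(N+m)). -/
lemma slope_aux (g : ℕ → ℕ) (hg : Monotone g)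
    (hconv : ∀ k : ℕ, 1 ≤ k → g k - g (k - 1) ≤ g (k + 1) - g k) :
    ∀ a b, a ≤ b → g (a + 1) + g b ≤ g (b + 1) + g a := by
  intro a b hab
  induction b, hab using Nat.le_induction with
  | base => omega
  | succ b hb ih =>
    have hc := hconv (b + 1) (by omega)
    simp only [Nat.add_sub_cancel] at hc
    have h1 : g b ≤ g (b + 1) := hg (by omega)
    have h2 : g (b + 1) ≤ g (b + 1 + 1) := hg (by omega)
    omega

lemma shift_aux (g : ℕ → ℕ) (hg : Monotone g)
    (hconv : ∀ k : ℕ, 1 ≤ k → g k - g (k - 1) ≤ g (k + 1) - g k) :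
    ∀ t n n', n ≤ n' → g (n + t) + g n' ≤ g (n' + t) + g n := by
  intro t
  induction t with
  | zero => intro n n' _; simp [Nat.add_comm]
  | succ t ih =>
    intro n n' h
    have h1 := ih n n' h
    have h2 := slope_aux g hg hconv (n + t) (n' + t) (by omega)
    have e1 : n + (t + 1) = n + t + 1 := by ring
    have e2 : n' + (t + 1) = n' + t + 1 := by ring
    rw [e1, e2]
    omega

/-- Condition (II) for functions equivalent to a convex increasing function:
if `g` is increasing with non-decreasing discrete derivative, `f` is
increasing, and `f n ≤ g (C n)`, `g n ≤ f (C n)`, then for all `m, N ≥ 1`: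
`f((C²+1)m) - f(C²m) ≤ (f(2C²N) - f N) * (f(2C²N + (C⁴+C²)m) - f(N+m))`. -/
theorem stmt_13 (f g : ℕ → ℕ) (hf : StrictMono f) (hg : Monotone g)
    (hconv : ∀ k : ℕ, 1 ≤ k → g k - g (k - 1) ≤ g (k + 1) - g k)
    (C : ℕ) (hC : 1 ≤ C)
    (h1 : ∀ n, f n ≤ g (C * n)) (h2 : ∀ n, g n ≤ f (C * n)) :
    ∀ m N : ℕ, 1 ≤ m → 1 ≤ N →
      f ((C ^ 2 + 1) * m) - f (C ^ 2 * m) ≤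
        (f (2 * C ^ 2 * N) - f N) *
          (f (2 * C ^ 2 * N + (C ^ 4 + C ^ 2) * m) - f (N + m)) := by
  intro m N hm hN
  -- the shift inequality instantiated
  have hshift := shift_aux g hg hconv (C ^ 3 * m) (C * m) (C * N + C * m)
    (by nlinarith)
  -- f ((C²+1)m) ≤ g (Cm + C³m)
  have ha : f ((C ^ 2 + 1) * m) ≤ g (C * m + C ^ 3 * m) := by
    have := h1 ((C ^ 2 + 1) * m)
    have e : C * ((C ^ 2 + 1) * m) = C * m + C ^ 3 * m := by ring
    rwa [e] at this
  -- g (Cm) ≤ f (C²m)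
  have hb : g (C * m) ≤ f (C ^ 2 * m) := by
    have := h2 (C * m)
    have e : C * (C * m) = C ^ 2 * m := by ring
    rwa [e] at this
  -- f (N+m) ≤ g (CN + Cm)
  have hc : f (N + m) ≤ g (C * N + C * m) := by
    have := h1 (N + m)
    have e : C * (N + m) = C * N + C * m := by ring
    rwa [e] at this
  -- g (CN + Cm + C³m) ≤ f (2C²N + (C⁴+C²)m)
  have hd : g (C * N + C * m + C ^ 3 * m) ≤ f (2 * C ^ 2 * N + (C ^ 4 + C ^ 2) * m) := by
    have h := h2 (C * N + C * m + C ^ 3 * m)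
    have e : C * (C * N + C * m + C ^ 3 * m) = C ^ 2 * N + (C ^ 4 + C ^ 2) * m := by ring
    rw [e] at h
    exact h.trans (hf.monotone (by nlinarith))
  -- the factor is at least 1
  have hk : 1 ≤ f (2 * C ^ 2 * N) - f N := by
    have hC2 : 1 ≤ C ^ 2 := Nat.one_le_pow _ _ hC
    have : f N < f (2 * C ^ 2 * N) := hf (by nlinarith)
    omega
  have key : f ((C ^ 2 + 1) * m) - f (C ^ 2 * m) ≤
      f (2 * C ^ 2 * N + (C ^ 4 + C ^ 2) * m) - f (N + m) := by
    have e : C * N + C * m + C ^ 3 * m = C * N + C * m + C ^ 3 * m := rfl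
    omega
  calc f ((C ^ 2 + 1) * m) - f (C ^ 2 * m)
      ≤ f (2 * C ^ 2 * N + (C ^ 4 + C ^ 2) * m) - f (N + m) := key
    _ ≤ (f (2 * C ^ 2 * N) - f N) *
          (f (2 * C ^ 2 * N + (C ^ 4 + C ^ 2) * m) - f (N + m)) :=
        Nat.le_mul_of_pos_left _ hk
end

section
/- Let (n_i) be a sequence of positive integers with n₁ > 2 and n_{i+1} > 2(n_i + i + 1) for all i. Define f : ℕ → ℕ by: f(k) = 2^k for k ≤ 2^{n₁}; f(k) = f(k−1) + k + 1 if 2^{n_i} < k ≤ 2^{n_i+i}; and f(k) = f(k−1) + min{ (f(d) − f(d−1))² : k/2 ≤ d < k } if 2^{n_i+i} < k ≤ 2^{n_{i+1}}. Then for all i and all k with 2^{n_{i+1}−1} < k ≤ 2^{n_{i+1}}, the discrete derivative satisfies f'(k) ≥ 2^{2^{n_{i+1}/2}}. -/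
/-- For the piecewise-defined function `f` (exponential up to `2^{n₁}`, linear
increments on `(2^{n_i}, 2^{n_i+i}]`, squared-derivative increments on
`(2^{n_i+i}, 2^{n_{i+1}}]`), with `n₁ > 2` and `n_{i+1} > 2(n_i + i + 1)`,
the discrete derivative satisfies `f' k ≥ 2^(2^(n_{i+1}/2))` for all
`2^{n_{i+1}-1} < k ≤ 2^{n_{i+1}}`. -/
theorem stmt_14 (ns : ℕ → ℕ) (hn1 : 2 < ns 1)
    (hgrow : ∀ i : ℕ, 1 ≤ i → 2 * (ns i + i + 1) < ns (i + 1))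
    (f : ℕ → ℕ)
    (hf1 : ∀ k : ℕ, k ≤ 2 ^ ns 1 → f k = 2 ^ k)
    (hf2 : ∀ i : ℕ, 1 ≤ i → ∀ k : ℕ, 2 ^ ns i < k → k ≤ 2 ^ (ns i + i) →
      f k = f (k - 1) + k + 1)
    (hf3 : ∀ i : ℕ, 1 ≤ i → ∀ k : ℕ, 2 ^ (ns i + i) < k → k ≤ 2 ^ ns (i + 1) →
      ∃ d : ℕ, k ≤ 2 * d ∧ d < k ∧
        f k = f (k - 1) + (f d - f (d - 1)) ^ 2 ∧
        ∀ e : ℕ, k ≤ 2 * e → e < k →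
          (f d - f (d - 1)) ^ 2 ≤ (f e - f (e - 1)) ^ 2) :
    ∀ i : ℕ, 1 ≤ i → ∀ k : ℕ, 2 ^ (ns (i + 1) - 1) < k → k ≤ 2 ^ ns (i + 1) →
      (2 : ℝ) ^ ((2 : ℝ) ^ ((ns (i + 1) : ℝ) / 2)) ≤ ((f k - f (k - 1) : ℕ) : ℝ) := by
  have hns3 : ∀ j, 1 ≤ j → 3 ≤ ns j := by
    intro j hj
    induction j with
    | zero => omega
    | succ m ih =>
      rcases Nat.eq_zero_or_pos m with rfl | hm
      · exact hn1
      · have h1 := hgrow m hm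
        have h2 := ih hm
        omega
  intro i hi k hk1 hk2
  -- Lemma C : f'(k) ≥ k + 1 on (2^{n_i}, 2^{n_{i+1}}]
  have hC : ∀ k : ℕ, 2 ^ ns i < k → k ≤ 2 ^ ns (i + 1) → k + 1 ≤ f k - f (k - 1) := by
    intro k
    induction k using Nat.strong_induction_on with
    | _ k ih =>
      intro hlo hhi
      by_cases hcase : k ≤ 2 ^ (ns i + i)
      · have h := hf2 i hi k hlo hcase
        omega
      · push_neg at hcase
        obtain ⟨d, hd1, hd2, hd3, _⟩ := hf3 i hi k hcase hhi
        have hdub : 2 * 2 ^ ns i ≤ 2 ^ (ns i + i) := by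
          calc 2 * 2 ^ ns i = 2 ^ (ns i + 1) := by rw [pow_succ]; ring
            _ ≤ 2 ^ (ns i + i) := Nat.pow_le_pow_right (by norm_num) (by omega)
        have hdlo : 2 ^ ns i < d := by omega
        have hIH := ih d hd2 hdlo (le_trans hd2.le hhi)
        have hsq : k + 1 ≤ (f d - f (d - 1)) ^ 2 := by nlinarith
        omega
  -- Lemma D : f'(k) ≥ 2^(2^t * n_i) for k > 2^{n_i+i+t}
  have hD : ∀ t : ℕ, ∀ k : ℕ, 2 ^ (ns i + i + t) < k → k ≤ 2 ^ ns (i + 1) →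
      2 ^ (2 ^ t * ns i) ≤ f k - f (k - 1) := by
    intro t
    induction t with
    | zero =>
      intro k hlo hhi
      have h1 := hC k (lt_of_le_of_lt (Nat.pow_le_pow_right (by norm_num) (by omega)) hlo) hhi
      have h2 : 2 ^ (2 ^ 0 * ns i) ≤ 2 ^ (ns i + i + 0) :=
        Nat.pow_le_pow_right (by norm_num) (by omega)
      omega
    | succ t ihT =>
      intro k hlo hhi
      have hcase : 2 ^ (ns i + i) < k :=
        lt_of_le_of_lt (Nat.pow_le_pow_right (by norm_num) (by omega)) hlo
      obtain ⟨d, hd1, hd2, hd3, _⟩ := hf3 i hi k hcase hhi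
      have hsplit : 2 ^ (ns i + i + t + 1) = 2 * 2 ^ (ns i + i + t) := by
        rw [pow_succ]; ring
      have hdlo : 2 ^ (ns i + i + t) < d := by
        rw [show ns i + i + (t + 1) = ns i + i + t + 1 from by omega, hsplit] at hlo
        omega
      have hIH := ihT d hdlo (le_trans hd2.le hhi)
      have key : 2 ^ (2 ^ (t + 1) * ns i) ≤ (f d - f (d - 1)) ^ 2 := by
        have heq : 2 ^ (2 ^ (t + 1) * ns i) = (2 ^ (2 ^ t * ns i)) ^ 2 := by
          rw [← pow_mul]
          congr 1
          rw [pow_succ]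
          ring
        rw [heq]
        exact Nat.pow_le_pow_left hIH 2
      omega
  -- choose t
  have hg := hgrow i hi
  have h3 := hns3 i hi
  set m := ns (i + 1) with hm
  set t := m - ns i - i - 2 with ht
  have htm : ns i + i + t = m - 2 := by omega
  have h2t : m ≤ 2 * t + 1 := by omega
  have hkgt : 2 ^ (ns i + i + t) < k := by
    refine lt_of_le_of_lt ?_ hk1
    rw [htm]
    exact Nat.pow_le_pow_right (by norm_num) (by omega)
  have hmain := hD t k hkgt hk2
  have hcast : ((2 ^ (2 ^ t * ns i) : ℕ) : ℝ) ≤ ((f k - f (k - 1) : ℕ) : ℝ) := by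
    exact_mod_cast hmain
  refine le_trans ?_ hcast
  push_cast
  rw [show ((2 : ℝ) ^ (2 ^ t * ns i)) = (2 : ℝ) ^ ((2 ^ t * ns i : ℕ) : ℝ) from
    (Real.rpow_natCast 2 _).symm]
  apply Real.rpow_le_rpow_of_exponent_le one_le_two
  push_cast
  have hexp : (m : ℝ) / 2 ≤ (t : ℝ) + 1 / 2 := by
    have : (m : ℝ) ≤ 2 * (t : ℝ) + 1 := by exact_mod_cast h2t
    linarith
  have hhalf : (2 : ℝ) ^ ((1 : ℝ) / 2) ≤ 2 := by
    have := Real.rpow_le_rpow_of_exponent_le (x := 2) one_le_two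
      (by norm_num : (1 : ℝ) / 2 ≤ 1)
    rwa [Real.rpow_one] at this
  have htpos : (0 : ℝ) < (2 : ℝ) ^ (t : ℝ) := Real.rpow_pos_of_pos two_pos _
  have hni : (2 : ℝ) ≤ (ns i : ℝ) := by exact_mod_cast (by omega : 2 ≤ ns i)
  calc (2 : ℝ) ^ ((m : ℝ) / 2)
      ≤ 2 ^ ((t : ℝ) + 1 / 2) := Real.rpow_le_rpow_of_exponent_le one_le_two hexp
    _ = 2 ^ (t : ℝ) * 2 ^ ((1 : ℝ) / 2) := Real.rpow_add two_pos _ _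
    _ ≤ 2 ^ (t : ℝ) * (ns i : ℝ) := by nlinarith
    _ = 2 ^ t * (ns i : ℝ) := by rw [Real.rpow_natCast]
end
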